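/- Let V be a nonzero finite-dimensional complex normed vector space, let H be a Hermitian sesquilinear form on V of signature (1, dim V − 1), let f : V → V be a linear map, and let s ≥ 0 and C ≥ 0 be real numbers such that for every v ∈ V and every natural number n one has H(fⁿ v, fⁿ v) ≥ −C · s^{2n} · ‖v‖² (note H(w, w) is real since H is Hermitian). Then the characteristic polynomial of f has at most one complex root of modulus strictly greater than s, counted with multiplicity. In particular, any eigenvalue λ of f with |λ| > s is a simple root of the characteristic polynomial and is the unique eigenvalue of modulus greater than s. -/

import Mathlib

/-!
Let `W` be the sum of the generalised eigenspaces of `f` for the eigenvalues of modulus `> s`, so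
that `dim W` is at least the number of roots being counted. On `W` the map `f` is invertible and,
by Gelfand's formula, `‖(f|_W)⁻ⁿ‖ ≤ r⁻ⁿ` eventually, for some `r > s`. Writing `q ∈ W` as `fⁿ yₙ`
with `‖yₙ‖ ≤ r⁻ⁿ ‖q‖`, the hypothesis gives `H(q, q) ≥ -|C| (s / r)²ⁿ ‖q‖² → 0`, so `H` is
positive semidefinite on `W`. If `dim W ≥ 2`, then `W` meets the hyperplane `N`, on which `H` is
negative definite: a contradiction.
-/

open scoped Classical

open Module Filter Topology

theorem iSupIndep.finrank_biSup_eq_sum {K V ι : Type*} [DivisionRing K] [AddCommGroup V]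
    [Module K V] [FiniteDimensional K V] {E : ι → Submodule K V} (hE : iSupIndep E)
    (s : Finset ι) : finrank K ↥(⨆ i ∈ s, E i) = ∑ i ∈ s, finrank K (E i) := by
  induction s using Finset.induction_on with
  | empty => simp
  | insert a s ha ih =>
    have hdisj : Disjoint (E a) (⨆ i ∈ s, E i) := hE.disjoint_biSup (y := (s : Set ι)) ha
    rw [Finset.iSup_insert, Finset.sum_insert ha, ← ih,
      ← Submodule.finrank_sup_add_finrank_inf_eq, hdisj.eq_bot, finrank_bot, add_zero]

namespace spectrum

theorem eventually_norm_pow_le_of_spectralRadius_lt {A : Type*} [NormedRing A]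
    [NormedAlgebra ℂ A] [CompleteSpace A] {a : A} {r : ℝ}
    (h : spectralRadius ℂ a < ENNReal.ofReal r) : ∀ᶠ n in atTop, ‖a ^ n‖ ≤ r ^ n := by
  filter_upwards [(pow_norm_pow_one_div_tendsto_nhds_spectralRadius a).eventually_lt_const h,
    eventually_ne_atTop 0] with n hn hn0
  have hroot : ‖a ^ n‖ ^ (n⁻¹ : ℝ) < r := by
    rw [← one_div]
    exact (ENNReal.ofReal_lt_ofReal_iff'.mp hn).1
  calc ‖a ^ n‖ = (‖a ^ n‖ ^ (n⁻¹ : ℝ)) ^ n :=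
        (Real.rpow_inv_natCast_pow (norm_nonneg _) hn0).symm
    _ ≤ r ^ n := pow_le_pow_left₀ (by positivity) hroot.le n

theorem spectralRadius_inv_le {𝕜 A : Type*} [NormedField 𝕜] [Ring A] [Algebra 𝕜 A] (u : Aˣ)
    {ρ : ℝ} (hρ : 0 < ρ) (h : ∀ μ ∈ spectrum 𝕜 (u : A), ρ ≤ ‖μ‖) :
    spectralRadius 𝕜 (↑u⁻¹ : A) ≤ ENNReal.ofReal ρ⁻¹ := by
  refine iSup₂_le fun μ hμ => ?_
  rw [← spectrum.map_inv, Set.mem_inv] at hμ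
  rw [← ENNReal.ofReal_coe_nnreal, coe_nnnorm]
  refine ENNReal.ofReal_le_ofReal ?_
  simpa using inv_anti₀ hρ (h _ hμ)

end spectrum

namespace Module.End

section Field

variable {K V : Type*} [Field K] [AddCommGroup V] [Module K V]

theorem card_filter_roots_charpoly_le_finrank [FiniteDimensional K V] (f : End K V)
    (p : K → Prop) [DecidablePred p] :
    (f.charpoly.roots.filter p).card ≤ finrank K ↥(⨆ μ ∈ {μ | p μ}, f.maxGenEigenspace μ) := by
  set R := (f.charpoly.roots.filter p).toFinset
  calc (f.charpoly.roots.filter p).card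
      = ∑ μ ∈ R, f.charpoly.rootMultiplicity μ := by
        rw [← Multiset.toFinset_sum_count_eq]
        refine Finset.sum_congr rfl fun μ hμ => ?_
        rw [Multiset.count_filter_of_pos (Multiset.of_mem_filter (Multiset.mem_toFinset.mp hμ)),
          Polynomial.count_roots]
    _ = finrank K ↥(⨆ μ ∈ R, f.maxGenEigenspace μ) := by
        simp only [← LinearMap.finrank_maxGenEigenspace_eq]
        exact (f.independent_maxGenEigenspace.finrank_biSup_eq_sum R).symm
    _ ≤ _ := Submodule.finrank_mono <| biSup_mono fun μ hμ =>
        Multiset.of_mem_filter (Multiset.mem_toFinset.mp hμ)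

theorem mapsTo_biSup_maxGenEigenspace (f : End K V) (S : Set K) :
    Set.MapsTo f ↑(⨆ μ ∈ S, f.maxGenEigenspace μ) ↑(⨆ μ ∈ S, f.maxGenEigenspace μ) := by
  have : ⨆ μ ∈ S, f.maxGenEigenspace μ ≤ (⨆ μ ∈ S, f.maxGenEigenspace μ).comap f :=
    iSup₂_le fun μ hμ x hx =>
      le_biSup f.maxGenEigenspace hμ (f.mapsTo_maxGenEigenspace_of_comm (.refl f) μ hx)
  exact fun x hx => this hx

theorem mem_of_hasEigenvalue_restrict_biSup_maxGenEigenspace (f : End K V) {S : Set K} {μ : K}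
    (hμ : HasEigenvalue (f.restrict (f.mapsTo_biSup_maxGenEigenspace S)) μ) : μ ∈ S := by
  obtain ⟨w, hw, hw0⟩ := hμ.exists_hasEigenvector
  by_contra hμS
  have hwμ : (w : V) ∈ f.maxGenEigenspace μ :=
    eigenspace_le_maxGenEigenspace <| mem_eigenspace_iff.mpr <|
      congrArg Subtype.val (mem_eigenspace_iff.mp hw)
  exact hw0 <| Subtype.ext <| Submodule.disjoint_def.mp
    (f.independent_maxGenEigenspace.disjoint_biSup hμS) _ hwμ w.2

end Field

theorem exists_gt_forall_hasEigenvalue_lt_norm {K V : Type*} [NormedField K] [AddCommGroup V]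
    [Module K V] [FiniteDimensional K V] (g : End K V) {s : ℝ}
    (h : ∀ μ, g.HasEigenvalue μ → s < ‖μ‖) :
    ∃ ρ, s < ρ ∧ ∀ μ, g.HasEigenvalue μ → ρ < ‖μ‖ := by
  have : ∀ᶠ ρ in 𝓝[>] s, ∀ μ ∈ {μ | g.HasEigenvalue μ}, ρ < ‖μ‖ :=
    (eventually_all_finite g.finite_hasEigenvalue).mpr fun μ hμ =>
      nhdsWithin_le_nhds (eventually_lt_nhds (h μ hμ))
  obtain ⟨ρ, hρ, hsρ⟩ := (this.and self_mem_nhdsWithin).exists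
  exact ⟨ρ, hsρ, hρ⟩

variable {E : Type*} [NormedAddCommGroup E] [NormedSpace ℂ E] [FiniteDimensional ℂ E]

theorem exists_gt_eventually_exists_pow_apply_eq_norm_le (g : End ℂ E) {s : ℝ} (hs : 0 ≤ s)
    (hg : ∀ μ, g.HasEigenvalue μ → s < ‖μ‖) :
    ∃ r, s < r ∧ ∀ᶠ n in atTop, ∀ x, ∃ y, (g ^ n) y = x ∧ ‖y‖ ≤ r⁻¹ ^ n * ‖x‖ := by
  obtain ⟨ρ, hsρ, hρ⟩ := g.exists_gt_forall_hasEigenvalue_lt_norm hg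
  set G := LinearMap.toContinuousLinearMap g
  have hσ : ∀ μ ∈ spectrum ℂ G, ρ ≤ ‖μ‖ := fun μ hμ => by
    rw [ContinuousLinearMap.spectrum_eq] at hμ
    exact (hρ μ (hasEigenvalue_iff_mem_spectrum.mpr hμ)).le
  have hG : IsUnit G := spectrum.isUnit_of_zero_notMem ℂ fun h0 => by
    have := hσ 0 h0
    rw [norm_zero] at this
    linarith
  set u := hG.unit
  set B : E →L[ℂ] E := ↑u⁻¹
  have hr : 0 < (s + ρ) / 2 := by linarith
  have hrad : spectralRadius ℂ B < ENNReal.ofReal ((s + ρ) / 2)⁻¹ :=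
    (spectrum.spectralRadius_inv_le u (hs.trans_lt hsρ) hσ).trans_lt <|
      (ENNReal.ofReal_lt_ofReal_iff (by positivity)).mpr (inv_strictAnti₀ hr (by linarith))
  refine ⟨(s + ρ) / 2, by linarith, ?_⟩
  filter_upwards [spectrum.eventually_norm_pow_le_of_spectralRadius_lt hrad] with n hn x
  refine ⟨(B ^ n) x, ?_,
    ((B ^ n).le_opNorm x).trans (mul_le_mul_of_nonneg_right hn (norm_nonneg x))⟩
  have hGB : G ^ n * B ^ n = 1 := by
    rw [← hG.unit_spec, ← Units.val_pow_eq_pow_val, ← Units.val_pow_eq_pow_val, ← Units.val_mul,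
      inv_pow, mul_inv_cancel, Units.val_one]
  have hpow : ∀ y, (G ^ n) y = (g ^ n) y := LinearMap.congr_fun (G.toLinearMap_pow n)
  rw [← hpow, ← mul_apply_eq_comp, hGB, one_apply_eq_self]

theorem nonneg_of_mem_biSup_maxGenEigenspace_of_pow_bound (f : End ℂ E) (Q : E → ℝ)
    {s C : ℝ} (hs : 0 ≤ s) (hQ : ∀ v n, -C * s ^ (2 * n) * ‖v‖ ^ 2 ≤ Q ((f ^ n) v)) {q : E}
    (hq : q ∈ ⨆ μ ∈ {μ : ℂ | s < ‖μ‖}, f.maxGenEigenspace μ) : 0 ≤ Q q := by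
  have hW := f.mapsTo_biSup_maxGenEigenspace {μ : ℂ | s < ‖μ‖}
  obtain ⟨r, hsr, hr⟩ := exists_gt_eventually_exists_pow_apply_eq_norm_le (f.restrict hW) hs
    fun _ => f.mem_of_hasEigenvalue_restrict_biSup_maxGenEigenspace
  have hr0 : 0 < r := hs.trans_lt hsr
  have hbound : ∀ᶠ n in atTop, -(|C| * ((s / r) ^ 2) ^ n * ‖q‖ ^ 2) ≤ Q q :=
    hr.mono fun n hn => by
      obtain ⟨y, hy, hny⟩ := hn ⟨q, hq⟩
      have hfy : (f ^ n) y = q := by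
        rw [End.pow_restrict n hW] at hy
        exact congrArg Subtype.val hy
      have hny2 : ‖(y : E)‖ ^ 2 ≤ (r⁻¹ ^ n * ‖q‖) ^ 2 := pow_le_pow_left₀ (norm_nonneg _) hny 2
      have habsC : C * (s ^ (2 * n) * ‖(y : E)‖ ^ 2) ≤ |C| * (s ^ (2 * n) * ‖(y : E)‖ ^ 2) :=
        mul_le_mul_of_nonneg_right (le_abs_self C) (by positivity)
      calc -(|C| * ((s / r) ^ 2) ^ n * ‖q‖ ^ 2)
          = -(|C| * s ^ (2 * n) * (r⁻¹ ^ n * ‖q‖) ^ 2) := by ring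
        _ ≤ -(|C| * s ^ (2 * n) * ‖(y : E)‖ ^ 2) := by gcongr
        _ ≤ -C * s ^ (2 * n) * ‖(y : E)‖ ^ 2 := by linarith
        _ ≤ Q q := hfy ▸ hQ y n
  have hlim : Tendsto (fun n : ℕ => -(|C| * ((s / r) ^ 2) ^ n * ‖q‖ ^ 2)) atTop (𝓝 0) := by
    have hsr2 : (s / r) ^ 2 < 1 :=
      pow_lt_one₀ (by positivity) ((div_lt_one hr0).mpr hsr) two_ne_zero
    simpa using ((tendsto_pow_atTop_nhds_zero_of_lt_one (by positivity) hsr2).const_mul |C|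
      |>.mul_const (‖q‖ ^ 2)).neg
  exact le_of_tendsto hlim hbound

end Module.End

theorem charpoly_at_most_one_large_root_of_hermitian_bound_general
    (V : Type*) [NormedAddCommGroup V] [NormedSpace ℂ V] [FiniteDimensional ℂ V]
    (H : V →ₗ[ℂ] V →ₛₗ[starRingEnd ℂ] ℂ)
    (N : Submodule ℂ V)
    (hdimN : Module.finrank ℂ N = Module.finrank ℂ V - 1)
    (hNneg : ∀ q ∈ N, q ≠ 0 → (H q q).re < 0)
    (f : V →ₗ[ℂ] V) (s C : ℝ) (hs : 0 ≤ s)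
    (hbound : ∀ (v : V) (n : ℕ),
      -C * s ^ (2 * n) * ‖v‖ ^ 2 ≤ (H ((f ^ n) v) ((f ^ n) v)).re) :
    ((LinearMap.charpoly f).roots.filter (fun z => s < ‖z‖)).card ≤ 1 := by
  set W := ⨆ μ ∈ {μ : ℂ | s < ‖μ‖}, End.maxGenEigenspace f μ
  by_contra! hcard
  have hW : 2 ≤ finrank ℂ W := hcard.trans_le (End.card_filter_roots_charpoly_le_finrank f _)
  have hmeet : ¬ Disjoint W N := fun hdisj => by
    have := Submodule.finrank_add_finrank_le_of_disjoint hdisj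
    have := Submodule.finrank_le W
    omega
  obtain ⟨q, hqW, hqN, hq0⟩ : ∃ q ∈ W, q ∈ N ∧ q ≠ 0 := by
    simpa [Submodule.disjoint_def] using hmeet
  exact (hNneg q hqN hq0).not_ge
    (End.nonneg_of_mem_biSup_maxGenEigenspace_of_pow_bound f (fun v => (H v v).re) hs hbound hqW)

/-- Let `V` be a nonzero finite-dimensional complex normed vector space, `H`
a Hermitian sesquilinear form on `V` of signature `(1, dim V − 1)`, `f : V → V` linear, and
`s, C ≥ 0` real numbers with `H(fⁿ v, fⁿ v) ≥ −C·s^(2n)·‖v‖²` for all `v` and `n`. Then the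
characteristic polynomial of `f` has at most one complex root of modulus `> s`, counted with
multiplicity (hence such an eigenvalue is simple and unique). -/
theorem charpoly_at_most_one_large_root_of_hermitian_bound
    (V : Type*) [NormedAddCommGroup V] [NormedSpace ℂ V] [FiniteDimensional ℂ V] [Nontrivial V]
    (H : V →ₗ[ℂ] V →ₛₗ[starRingEnd ℂ] ℂ)
    (hHerm : ∀ u v : V, H v u = star (H u v))
    (P N : Submodule ℂ V) (hcompl : IsCompl P N)
    (hdimP : Module.finrank ℂ P = 1)
    (hdimN : Module.finrank ℂ N = Module.finrank ℂ V - 1)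
    (hPpos : ∀ p ∈ P, p ≠ 0 → 0 < (H p p).re)
    (hNneg : ∀ q ∈ N, q ≠ 0 → (H q q).re < 0)
    (hPN : ∀ p ∈ P, ∀ q ∈ N, H p q = 0)
    (f : V →ₗ[ℂ] V) (s C : ℝ) (hs : 0 ≤ s) (hC : 0 ≤ C)
    (hbound : ∀ (v : V) (n : ℕ),
      -C * s ^ (2 * n) * ‖v‖ ^ 2 ≤ (H ((f ^ n) v) ((f ^ n) v)).re) :
    ((LinearMap.charpoly f).roots.filter (fun z => s < ‖z‖)).card ≤ 1 :=
  charpoly_at_most_one_large_root_of_hermitian_bound_general V H N hdimN hNneg f s C hs hbound
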